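/- arXiv:1405.7158 — 2 statements merged into one kernel-verified Lean document; each statement's English description precedes it below -/
import Mathlib

section
/- Let n ≥ 1 be a natural number and let C₁ ≥ 0, C₂ ≥ 0, η ≥ 0, β > 0 be real numbers with C₁ * C₂ * η * β² < 1. Let a, b, e : ℕ → ℝ be sequences of nonnegative real numbers such that a 1 = 0, b k ≤ C₂ * η * a k for every k with 1 ≤ k ≤ n, a (k+1) ≤ C₁ * (e k + b k) for every k with 1 ≤ k ≤ n − 1, and e k ≤ β^(2(n−k)) * e n for every k with 1 ≤ k ≤ n. Then a n ≤ (C₁ * β² / (1 − C₁ * C₂ * η * β²)) * e n. -/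
/-!
Substituting `b k ≤ C₂ η a k` into the recursion gives `a (k + 1) ≤ C₁ e k + q a k` with
`q = C₁ C₂ η`, while `e k ≤ r ^ (n - k) e n` for `r = β²`. Hence `a k ≤ M r ^ (n - k) e n`
propagates from `k = 1` to `k = n` as soon as `M` is a fixed point of `M ↦ C₁ r + q r M`,
i.e. `M = C₁ β² / (1 - C₁ C₂ η β²)`, which is where the smallness condition enters.
-/

theorem le_mul_pow_sub_mul_of_step_le {x f : ℕ → ℝ} {p q r M E : ℝ} {m n : ℕ}
    (hp : 0 ≤ p) (hq : 0 ≤ q) (hr : 0 ≤ r) (hE : 0 ≤ E)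
    (hfix : p * r + q * r * M ≤ M)
    (hstep : ∀ k, m ≤ k → k < n → x (k + 1) ≤ p * f k + q * x k)
    (hf : ∀ k, m ≤ k → k < n → f k ≤ r ^ (n - k) * E)
    (hxm : x m ≤ M * r ^ (n - m) * E) :
    ∀ k, m ≤ k → k ≤ n → x k ≤ M * r ^ (n - k) * E := by
  intro k hmk
  induction k, hmk using Nat.le_induction with
  | base => exact fun _ => hxm
  | succ k hmk ih =>
    intro hkn
    have hpow : r ^ (n - k) = r * r ^ (n - (k + 1)) := by
      rw [← pow_succ']
      congr 1
      omega
    have hweight : 0 ≤ r ^ (n - (k + 1)) * E := by positivity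
    calc x (k + 1) ≤ p * f k + q * x k := hstep k hmk hkn
      _ ≤ p * (r ^ (n - k) * E) + q * (M * r ^ (n - k) * E) := by
          gcongr
          exacts [hf k hmk hkn, ih (Nat.le_of_succ_le hkn)]
      _ = (p * r + q * r * M) * (r ^ (n - (k + 1)) * E) := by rw [hpow]; ring
      _ ≤ M * (r ^ (n - (k + 1)) * E) := by gcongr
      _ = M * r ^ (n - (k + 1)) * E := by ring

theorem multigrid_H1_error_bound_general
    (n : ℕ) (hn : 1 ≤ n) (C₁ C₂ η β : ℝ)
    (hC₁ : 0 ≤ C₁) (hC₂ : 0 ≤ C₂) (hη : 0 ≤ η)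
    (hsmall : C₁ * C₂ * η * β ^ 2 < 1)
    (a b e : ℕ → ℝ)
    (he_nonneg : ∀ k, 0 ≤ e k)
    (ha1 : a 1 = 0)
    (hb : ∀ k, 1 ≤ k → k ≤ n → b k ≤ C₂ * η * a k)
    (hrec : ∀ k, 1 ≤ k → k ≤ n - 1 → a (k + 1) ≤ C₁ * (e k + b k))
    (he : ∀ k, 1 ≤ k → k ≤ n → e k ≤ β ^ (2 * (n - k)) * e n) :
    a n ≤ (C₁ * β ^ 2 / (1 - C₁ * C₂ * η * β ^ 2)) * e n := by
  have hgap : 0 < 1 - C₁ * C₂ * η * β ^ 2 := sub_pos.2 hsmall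
  set M := C₁ * β ^ 2 / (1 - C₁ * C₂ * η * β ^ 2)
  have hM : 0 ≤ M := div_nonneg (by positivity) hgap.le
  have hfix : C₁ * β ^ 2 + C₁ * C₂ * η * β ^ 2 * M = M := by
    have hM_mul : M * (1 - C₁ * C₂ * η * β ^ 2) = C₁ * β ^ 2 := div_mul_cancel₀ _ hgap.ne'
    linear_combination -hM_mul
  have hstep : ∀ k, 1 ≤ k → k < n → a (k + 1) ≤ C₁ * e k + C₁ * C₂ * η * a k := by
    intro k hk hkn
    calc a (k + 1) ≤ C₁ * (e k + b k) := hrec k hk (by omega)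
      _ ≤ C₁ * (e k + C₂ * η * a k) := by gcongr; exact hb k hk hkn.le
      _ = C₁ * e k + C₁ * C₂ * η * a k := by ring
  have hbound := le_mul_pow_sub_mul_of_step_le hC₁ (by positivity) (sq_nonneg β)
    (he_nonneg n) hfix.le hstep (fun k hk hkn => by simpa only [pow_mul] using he k hk hkn.le)
    (by rw [ha1]; exact mul_nonneg (mul_nonneg hM (by positivity)) (he_nonneg n)) n hn le_rfl
  simpa using hbound

theorem multigrid_H1_error_bound
    (n : ℕ) (hn : 1 ≤ n) (C₁ C₂ η β : ℝ)
    (hC₁ : 0 ≤ C₁) (hC₂ : 0 ≤ C₂) (hη : 0 ≤ η) (hβ : 0 < β)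
    (hsmall : C₁ * C₂ * η * β ^ 2 < 1)
    (a b e : ℕ → ℝ)
    (ha_nonneg : ∀ k, 0 ≤ a k) (hb_nonneg : ∀ k, 0 ≤ b k)
    (he_nonneg : ∀ k, 0 ≤ e k)
    (ha1 : a 1 = 0)
    (hb : ∀ k, 1 ≤ k → k ≤ n → b k ≤ C₂ * η * a k)
    (hrec : ∀ k, 1 ≤ k → k ≤ n - 1 → a (k + 1) ≤ C₁ * (e k + b k))
    (he : ∀ k, 1 ≤ k → k ≤ n → e k ≤ β ^ (2 * (n - k)) * e n) :
    a n ≤ (C₁ * β ^ 2 / (1 - C₁ * C₂ * η * β ^ 2)) * e n :=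
  multigrid_H1_error_bound_general n hn C₁ C₂ η β hC₁ hC₂ hη hsmall a b e he_nonneg ha1 hb hrec he
end

section
/- Let n ≥ 1 be a natural number and let C₁ ≥ 0, C₂ ≥ 0, η ≥ 0, β > 0 be real numbers with C₁ * C₂ * η * β² < 1. Let a, b, e : ℕ → ℝ be sequences of nonnegative real numbers such that a 1 = 0, b k ≤ C₂ * η * a k for every k with 1 ≤ k ≤ n, a (k+1) ≤ C₁ * (e k + b k) for every k with 1 ≤ k ≤ n − 1, and e k ≤ β^(2(n−k)) * e n for every k with 1 ≤ k ≤ n. Then b n ≤ (C₁ * C₂ * η * β² / (1 − C₁ * C₂ * η * β²)) * e n. -/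
/-!
By induction upwards from the coarsest level, `a k ≤ K β^(2(n-k))` where
`K = C₁β²e_n / (1 - C₁C₂ηβ²)` is the fixed point of `K = β²C₁(e_n + C₂ηK)`, the relation that
one step of the recursion imposes on the bound. At the finest level this gives `a n ≤ K`,
and then `b n ≤ C₂η a n`.
-/

theorem le_mul_pow_sub_of_recursion {a b e : ℕ → ℝ} {C₁ ρ γ E : ℝ} {m n : ℕ}
    (hC₁ : 0 ≤ C₁) (hρ : 0 ≤ ρ) (hγ : 0 ≤ γ) (hE : 0 ≤ E) (hsmall : C₁ * ρ * γ < 1)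
    (ham : a m = 0)
    (hb : ∀ k, m ≤ k → k < n → b k ≤ ρ * a k)
    (hrec : ∀ k, m ≤ k → k < n → a (k + 1) ≤ C₁ * (e k + b k))
    (he : ∀ k, m ≤ k → k < n → e k ≤ γ ^ (n - k) * E) :
    ∀ k, m ≤ k → k ≤ n → a k ≤ C₁ * γ * E / (1 - C₁ * ρ * γ) * γ ^ (n - k) := by
  have hq : 0 < 1 - C₁ * ρ * γ := by linarith
  set K := C₁ * γ * E / (1 - C₁ * ρ * γ)
  have hK : C₁ * (E + ρ * K) * γ = K := by
    simp only [K]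
    field_simp
    ring
  intro k hk
  induction k, hk using Nat.le_induction with
  | base =>
    intro _
    rw [ham]
    positivity
  | succ k hk ih =>
    intro hkn
    have hkn' : k < n := by omega
    have hpow : γ ^ (n - k) = γ ^ (n - (k + 1)) * γ := by
      rw [← pow_succ]
      congr 1
      omega
    have hbk : b k ≤ ρ * (K * γ ^ (n - k)) :=
      (hb k hk hkn').trans (by gcongr; exact ih hkn'.le)
    calc a (k + 1) ≤ C₁ * (e k + b k) := hrec k hk hkn'
      _ ≤ C₁ * (γ ^ (n - k) * E + ρ * (K * γ ^ (n - k))) := by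
        gcongr
        exact he k hk hkn'
      _ = C₁ * (E + ρ * K) * γ * γ ^ (n - (k + 1)) := by
        rw [hpow]
        ring
      _ = K * γ ^ (n - (k + 1)) := by rw [hK]

theorem multigrid_eigenvalue_L2_error_bound_general
    (n : ℕ) (hn : 1 ≤ n) (C₁ C₂ η β : ℝ)
    (hC₁ : 0 ≤ C₁) (hC₂ : 0 ≤ C₂) (hη : 0 ≤ η)
    (hsmall : C₁ * C₂ * η * β ^ 2 < 1)
    (a b e : ℕ → ℝ)
    (he_nonneg : ∀ k, 0 ≤ e k)
    (ha1 : a 1 = 0)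
    (hb : ∀ k, 1 ≤ k → k ≤ n → b k ≤ C₂ * η * a k)
    (hrec : ∀ k, 1 ≤ k → k ≤ n - 1 → a (k + 1) ≤ C₁ * (e k + b k))
    (he : ∀ k, 1 ≤ k → k ≤ n → e k ≤ β ^ (2 * (n - k)) * e n) :
    b n ≤ (C₁ * C₂ * η * β ^ 2 / (1 - C₁ * C₂ * η * β ^ 2)) * e n := by
  have hsmall' : C₁ * (C₂ * η) * β ^ 2 < 1 := by rwa [← mul_assoc]
  have han : a n ≤ C₁ * β ^ 2 * e n / (1 - C₁ * (C₂ * η) * β ^ 2) := by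
    simpa using le_mul_pow_sub_of_recursion hC₁ (by positivity) (by positivity) (he_nonneg n)
      hsmall' ha1 (fun k hk hkn => hb k hk hkn.le) (fun k hk hkn => hrec k hk (by omega))
      (fun k hk hkn => by rw [← pow_mul]; exact he k hk hkn.le) n hn le_rfl
  calc b n ≤ C₂ * η * a n := hb n hn le_rfl
    _ ≤ C₂ * η * (C₁ * β ^ 2 * e n / (1 - C₁ * (C₂ * η) * β ^ 2)) := by gcongr
    _ = (C₁ * C₂ * η * β ^ 2 / (1 - C₁ * C₂ * η * β ^ 2)) * e n := by
      ring

theorem multigrid_eigenvalue_L2_error_bound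
    (n : ℕ) (hn : 1 ≤ n) (C₁ C₂ η β : ℝ)
    (hC₁ : 0 ≤ C₁) (hC₂ : 0 ≤ C₂) (hη : 0 ≤ η) (hβ : 0 < β)
    (hsmall : C₁ * C₂ * η * β ^ 2 < 1)
    (a b e : ℕ → ℝ)
    (ha_nonneg : ∀ k, 0 ≤ a k) (hb_nonneg : ∀ k, 0 ≤ b k)
    (he_nonneg : ∀ k, 0 ≤ e k)
    (ha1 : a 1 = 0)
    (hb : ∀ k, 1 ≤ k → k ≤ n → b k ≤ C₂ * η * a k)
    (hrec : ∀ k, 1 ≤ k → k ≤ n - 1 → a (k + 1) ≤ C₁ * (e k + b k))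
    (he : ∀ k, 1 ≤ k → k ≤ n → e k ≤ β ^ (2 * (n - k)) * e n) :
    b n ≤ (C₁ * C₂ * η * β ^ 2 / (1 - C₁ * C₂ * η * β ^ 2)) * e n :=
  multigrid_eigenvalue_L2_error_bound_general n hn C₁ C₂ η β hC₁ hC₂ hη hsmall a b e he_nonneg ha1
    hb hrec he
end
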